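/- Let D be a Hermitian Dirac operator with zero diagonal on n vertices. For any two vertices i and j, the noncommutative distance d^D(i,j) is finite (equivalently, the set {|a(i)−a(j)| : ‖[D,π(a)]‖ ≤ 1} is bounded above) if and only if i and j lie in the same connected component of the graph G_D. -/

import Mathlib

open scoped ENNReal

/-- The operator norm on square matrices induced by the Euclidean (ℓ²) norm. -/
noncomputable def opNorm {ι : Type*} [Finite ι] (M : Matrix ι ι ℂ) : ℝ :=
  letI := Fintype.ofFinite ι
  letI := Classical.decEq ι
  ‖Matrix.toEuclideanCLM (𝕜 := ℂ) M‖

/-- The commutator `[D, π(a)]` of a matrix with the diagonal matrix of `a`. -/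
noncomputable def commD {ι : Type*} [Finite ι] (D : Matrix ι ι ℂ) (a : ι → ℂ) : Matrix ι ι ℂ :=
  letI := Fintype.ofFinite ι
  letI := Classical.decEq ι
  D * Matrix.diagonal a - Matrix.diagonal a * D

/-- Connes' noncommutative distance associated to the Dirac operator `D`. -/
noncomputable def ncDist {ι : Type*} [Finite ι] (D : Matrix ι ι ℂ) (i j : ι) : ℝ≥0∞ :=
  ⨆ (a : ι → ℂ) (_ : opNorm (commD D a) ≤ 1), ENNReal.ofReal ‖a i - a j‖

/-- The weight of an edge: the inverse of `|D i j|` (infinite if `D i j = 0`). -/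
noncomputable def eWeight {ι : Type*} (D : Matrix ι ι ℂ) (u v : ι) : ℝ≥0∞ :=
  (ENNReal.ofReal ‖D u v‖)⁻¹

/-- Adjacency in the graph `G_D`. -/
def Adjac {ι : Type*} (D : Matrix ι ι ℂ) (u v : ι) : Prop := u ≠ v ∧ D u v ≠ 0

/-- The length of a walk `i :: p` computed with weights `eWeight D`. -/
noncomputable def walkLength {ι : Type*} (D : Matrix ι ι ℂ) : ι → List ι → ℝ≥0∞
  | _, [] => 0
  | u, v :: rest => eWeight D u v + walkLength D v rest

/-- `i :: p` is a walk from `i` to `j` in the graph `G_D`. -/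
def IsWalk {ι : Type*} (D : Matrix ι ι ℂ) (i j : ι) (p : List ι) : Prop :=
  List.Chain (Adjac D) i p ∧ (i :: p).getLast (List.cons_ne_nil _ _) = j

/-- `i` and `j` lie in the same connected component of `G_D`. -/
def Conn {ι : Type*} (D : Matrix ι ι ℂ) (i j : ι) : Prop := ∃ p, IsWalk D i j p

/-- The geodesic (weighted shortest-path) distance on `G_D`. -/
noncomputable def gDist {ι : Type*} (D : Matrix ι ι ℂ) (i j : ι) : ℝ≥0∞ :=
  ⨅ (p : List ι) (_ : IsWalk D i j p), walkLength D i p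

/-!
Every entry `D u v (a v - a u)` of `[D, π(a)]` is dominated by its operator norm, so an
admissible `a` is Lipschitz along each edge with constant `|D u v|⁻¹`; hence `d^D(i, j)` is at
most the weighted length of any walk from `i` to `j`, which is finite. Conversely, when `j` is
not reachable from `i`, any multiple of the indicator of the component of `i` commutes with `D`
(the component is closed under adjacency because `D` is Hermitian), so `d^D(i, j) = ∞`.
-/

section Matrix

variable {ι : Type*}

lemma opNorm_eq [Fintype ι] [DecidableEq ι] (M : Matrix ι ι ℂ) :
    opNorm M = ‖Matrix.toEuclideanCLM (𝕜 := ℂ) M‖ := by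
  unfold opNorm
  congr!

lemma opNorm_zero [Finite ι] : opNorm (0 : Matrix ι ι ℂ) = 0 := by
  have := Fintype.ofFinite ι
  classical
  rw [opNorm_eq, map_zero, norm_zero]

lemma Matrix.norm_apply_le_norm_toEuclideanCLM {𝕜 : Type*} [RCLike 𝕜] [Fintype ι]
    [DecidableEq ι] (M : Matrix ι ι 𝕜) (u v : ι) :
    ‖M u v‖ ≤ ‖Matrix.toEuclideanCLM (𝕜 := 𝕜) M‖ := by
  set T := Matrix.toEuclideanCLM (𝕜 := 𝕜) M
  have hcol : T (PiLp.single 2 v 1) u = M u v := by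
    rw [← PiLp.toLp_single, Matrix.toEuclideanCLM_toLp, Matrix.mulVec_single_one]
    rfl
  calc ‖M u v‖ = ‖T (PiLp.single 2 v 1) u‖ := by rw [hcol]
    _ ≤ ‖T (PiLp.single 2 v 1)‖ := PiLp.norm_apply_le _ u
    _ ≤ ‖T‖ * ‖(PiLp.single 2 v 1 : EuclideanSpace 𝕜 ι)‖ := T.le_opNorm _
    _ = ‖T‖ := by rw [PiLp.norm_single, norm_one, mul_one]

lemma norm_apply_le_opNorm [Finite ι] (M : Matrix ι ι ℂ) (u v : ι) : ‖M u v‖ ≤ opNorm M := by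
  have := Fintype.ofFinite ι
  classical
  exact opNorm_eq M ▸ M.norm_apply_le_norm_toEuclideanCLM u v

lemma commD_apply [Finite ι] (D : Matrix ι ι ℂ) (a : ι → ℂ) (u v : ι) :
    commD D a u v = D u v * (a v - a u) := by
  unfold commD
  simp only [Matrix.sub_apply, Matrix.mul_diagonal, Matrix.diagonal_mul]
  ring

lemma commD_eq_zero [Finite ι] {D : Matrix ι ι ℂ} {a : ι → ℂ}
    (ha : ∀ u v, Adjac D u v → a u = a v) : commD D a = 0 := by
  ext u v
  rw [commD_apply, Matrix.zero_apply]
  by_cases huv : u = v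
  · simp [huv]
  by_cases hD : D u v = 0
  · simp [hD]
  simp [ha u v ⟨huv, hD⟩]

end Matrix

section Graph

variable {ι : Type*} {D : Matrix ι ι ℂ}

lemma Adjac.symm (hD : D.IsHermitian) {u v : ι} (h : Adjac D u v) : Adjac D v u := by
  refine ⟨h.1.symm, ?_⟩
  rw [← hD.apply v u]
  exact star_ne_zero.mpr h.2

lemma conn_iff_reflTransGen {i j : ι} : Conn D i j ↔ Relation.ReflTransGen (Adjac D) i j :=
  ⟨fun ⟨p, hp, hlast⟩ => List.relationReflTransGen_of_exists_isChain_cons p hp hlast,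
    List.exists_isChain_cons_of_relationReflTransGen⟩

lemma eWeight_ne_top {u v : ι} (h : D u v ≠ 0) : eWeight D u v ≠ ⊤ := by
  rw [eWeight, Ne, ENNReal.inv_eq_top, ENNReal.ofReal_eq_zero, not_le]
  exact norm_pos_iff.mpr h

lemma walkLength_ne_top :
    ∀ (u : ι) (p : List ι), List.IsChain (Adjac D) (u :: p) → walkLength D u p ≠ ⊤
  | _, [], _ => ENNReal.zero_ne_top
  | u, v :: rest, hp => by
    obtain ⟨huv, hrest⟩ := List.isChain_cons_cons.mp hp
    exact ENNReal.add_ne_top.mpr ⟨eWeight_ne_top huv.2, walkLength_ne_top v rest hrest⟩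

lemma gDist_ne_top {i j : ι} (h : Conn D i j) : gDist D i j ≠ ⊤ :=
  let ⟨p, hp⟩ := h
  ne_top_of_le_ne_top (walkLength_ne_top i p hp.1) (iInf₂_le p hp)

end Graph

section Lipschitz

variable {ι : Type*} [Finite ι] {D : Matrix ι ι ℂ} {a : ι → ℂ}

lemma ofReal_norm_sub_le_eWeight (ha : opNorm (commD D a) ≤ 1) {u v : ι} (h : D u v ≠ 0) :
    ENNReal.ofReal ‖a u - a v‖ ≤ eWeight D u v := by
  have hpos : 0 < ‖D u v‖ := norm_pos_iff.mpr h
  have hentry : ‖D u v‖ * ‖a v - a u‖ ≤ 1 := by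
    rw [← norm_mul, ← commD_apply]
    exact (norm_apply_le_opNorm _ u v).trans ha
  rw [eWeight, ← ENNReal.ofReal_inv_of_pos hpos, norm_sub_rev, ← one_div]
  exact ENNReal.ofReal_le_ofReal ((le_div_iff₀' hpos).mpr hentry)

lemma ofReal_norm_sub_le_walkLength (ha : opNorm (commD D a) ≤ 1) :
    ∀ (u : ι) (p : List ι), List.IsChain (Adjac D) (u :: p) →
      ENNReal.ofReal ‖a u - a ((u :: p).getLast (List.cons_ne_nil _ _))‖ ≤ walkLength D u p
  | _, [], _ => by simp [walkLength]
  | u, v :: rest, hp => by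
    obtain ⟨huv, hrest⟩ := List.isChain_cons_cons.mp hp
    rw [List.getLast_cons (List.cons_ne_nil _ _)]
    set w := (v :: rest).getLast (List.cons_ne_nil _ _)
    calc ENNReal.ofReal ‖a u - a w‖
        ≤ ENNReal.ofReal (‖a u - a v‖ + ‖a v - a w‖) :=
          ENNReal.ofReal_le_ofReal (norm_sub_le_norm_sub_add_norm_sub _ _ _)
      _ ≤ ENNReal.ofReal ‖a u - a v‖ + ENNReal.ofReal ‖a v - a w‖ := ENNReal.ofReal_add_le
      _ ≤ eWeight D u v + walkLength D v rest :=
          add_le_add (ofReal_norm_sub_le_eWeight ha huv.2)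
            (ofReal_norm_sub_le_walkLength ha v rest hrest)

lemma ofReal_norm_sub_le_ncDist (ha : opNorm (commD D a) ≤ 1) (i j : ι) :
    ENNReal.ofReal ‖a i - a j‖ ≤ ncDist D i j :=
  le_iSup₂_of_le (f := fun a (_ : opNorm (commD D a) ≤ 1) => ENNReal.ofReal ‖a i - a j‖)
    a ha le_rfl

lemma ncDist_le_gDist (D : Matrix ι ι ℂ) (i j : ι) : ncDist D i j ≤ gDist D i j :=
  le_iInf₂ fun p hp => iSup₂_le fun _ ha =>
    hp.2 ▸ ofReal_norm_sub_le_walkLength ha i p hp.1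

lemma ncDist_eq_top_of_not_conn (hD : D.IsHermitian) {i j : ι} (h : ¬Conn D i j) :
    ncDist D i j = ⊤ := by
  classical
  refine ENNReal.eq_top_of_forall_nnreal_le fun t => ?_
  set a : ι → ℂ := fun k => if Conn D i k then (t : ℂ) else 0
  have hclosed : ∀ u v, Adjac D u v → (Conn D i u ↔ Conn D i v) := fun u v huv => by
    simp only [conn_iff_reflTransGen]
    exact ⟨fun hu => hu.tail huv, fun hv => hv.tail (huv.symm hD)⟩
  have hcomm : commD D a = 0 := commD_eq_zero fun u v huv => by
    simp only [a, hclosed u v huv]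
  have ha : opNorm (commD D a) ≤ 1 := by rw [hcomm, opNorm_zero]; exact zero_le_one
  have hi : Conn D i i := ⟨[], List.isChain_singleton i, rfl⟩
  have hval : ENNReal.ofReal ‖a i - a j‖ = t := by simp [a, hi, h]
  exact hval ▸ ofReal_norm_sub_le_ncDist ha i j

end Lipschitz

theorem stmt3_general {n : ℕ} (D : Matrix (Fin n) (Fin n) ℂ)
    (hherm : D.IsHermitian) (i j : Fin n) :
    ncDist D i j ≠ ⊤ ↔ Conn D i j :=
  ⟨fun h => by_contra fun hconn => h (ncDist_eq_top_of_not_conn hherm hconn),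
    fun hconn => ne_top_of_le_ne_top (gDist_ne_top hconn) (ncDist_le_gDist D i j)⟩

theorem stmt3 {n : ℕ} (D : Matrix (Fin n) (Fin n) ℂ)
    (hherm : D.IsHermitian) (hdiag : ∀ i, D i i = 0) (i j : Fin n) :
    ncDist D i j ≠ ⊤ ↔ Conn D i j :=
  stmt3_general D hherm i j
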